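/- arXiv:2206.13512 — 2 statements merged into one kernel-verified Lean document; each statement's English description precedes it below -/
import Mathlib

section
/- A set A is G-paradoxical if and only if it contains two disjoint subsets A₁ and A₂, each G-equidecomposable with A. -/
open scoped Pointwise

/-- `A` and `B` are `G`-equidecomposable: there are finite partitions
`A = A₁ ∪ … ∪ Aₙ` and `B = B₁ ∪ … ∪ Bₙ` into pairwise disjoint pieces and
`g₁, …, gₙ ∈ G` with `Bᵢ = gᵢ • Aᵢ`. -/
def EquidecompG (G : Type*) {X : Type*} [Group G] [MulAction G X] (A B : Set X) : Prop :=
  ∃ (n : ℕ) (P : Fin n → Set X) (g : Fin n → G),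
    Pairwise (Function.onFun Disjoint P) ∧ (⋃ i, P i) = A ∧
    Pairwise (Function.onFun Disjoint fun i => g i • P i) ∧ (⋃ i, g i • P i) = B

/-- `E` is `G`-paradoxical: `E` is nonempty and splits into two disjoint pieces,
each `G`-equidecomposable with `E`. -/
def Paradoxical (G : Type*) {X : Type*} [Group G] [MulAction G X] (E : Set X) : Prop :=
  E.Nonempty ∧ ∃ A B : Set X, A ∪ B = E ∧ Disjoint A B ∧
    EquidecompG G A E ∧ EquidecompG G B E

/-!
A set squeezed between `A` and a set equidecomposable with `A` is itself equidecomposable with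
`A` (Banach–Schröder–Bernstein). Since an equidecomposition of `A` with `C` is the same as a
bijection `A → C` moving each point by one of finitely many group elements, this follows from
the Schröder–Bernstein construction, which only adds the identity as a new group element.
Given disjoint `A₁, A₂ ⊆ A` equidecomposable with `A`, it applies to `A₁ ⊆ A \ A₂ ⊆ A`, so
`A = (A \ A₂) ∪ A₂` is a paradoxical decomposition.
-/

open Set Function Equidecomp

theorem Set.InjOn.exists_bijOn_of_mapsTo_of_subset {X : Type*} {f : X → X} {A B : Set X}
    (hf : InjOn f A) (hfB : MapsTo f A B) (hBA : B ⊆ A) :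
    ∃ h : X → X, BijOn h A B ∧ ∀ a ∈ A, h a = f a ∨ h a = a := by
  classical
  -- The fixed-point equation `(A \ B) ∪ f '' D = D` is what makes `D.piecewise f id` map `A`
  -- bijectively onto `B`.
  let Φ : Set X →o Set X :=
    ⟨fun s ↦ (A \ B) ∪ f '' s, fun _ _ hst ↦ union_subset_union_right _ (image_mono hst)⟩
  set D := Φ.lfp
  have hD : (A \ B) ∪ f '' D = D := Φ.map_lfp
  have hDA : D ⊆ A := Φ.lfp_le (union_subset sdiff_subset ((image_subset_iff.2 hfB).trans hBA))
  have hfD : MapsTo f D D := fun x hx ↦ hD ▸ mem_union_right _ (mem_image_of_mem f hx)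
  refine ⟨D.piecewise f id, ⟨fun a ha ↦ ?_, fun a ha b hb hab ↦ ?_, fun b hb ↦ ?_⟩, fun a _ ↦ ?_⟩
  · by_cases haD : a ∈ D
    · simpa [haD] using hfB ha
    · simpa [haD] using not_imp_comm.1 (fun hab ↦ hD ▸ mem_union_left _ ⟨ha, hab⟩) haD
  · by_cases haD : a ∈ D <;> by_cases hbD : b ∈ D <;> simp only [piecewise_eq_of_mem,
      piecewise_eq_of_notMem, haD, hbD, not_false_eq_true, id_eq] at hab
    · exact hf ha hb hab
    · exact absurd (hab ▸ hfD haD) hbD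
    · exact absurd (hab ▸ hfD hbD) haD
    · exact hab
  · by_cases hbD : b ∈ D
    · rw [← hD] at hbD
      rcases hbD with ⟨-, hbB⟩ | ⟨a, haD, rfl⟩
      · exact absurd hb hbB
      · exact ⟨a, hDA haD, by simp [haD]⟩
    · exact ⟨b, hBA hb, by simp [hbD]⟩
  · by_cases haD : a ∈ D <;> simp [haD]

namespace EquidecompG

variable {G X : Type*} [Group G] [MulAction G X] {A B C : Set X}

theorem symm (h : EquidecompG G A B) : EquidecompG G B A := by
  obtain ⟨n, P, g, hP, hPA, hgP, hgPB⟩ := h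
  refine ⟨n, fun i ↦ g i • P i, fun i ↦ (g i)⁻¹, hgP, hgPB, ?_, ?_⟩ <;>
    simpa only [inv_smul_smul]

theorem exists_bijOn_isDecompOn (h : EquidecompG G A B) :
    ∃ (f : X → X) (S : Finset G), BijOn f A B ∧ IsDecompOn f A S := by
  classical
  obtain ⟨n, P, g, hP, rfl, hgP, rfl⟩ := h
  let f : X → X := fun x ↦ if hx : ∃ i, x ∈ P i then g hx.choose • x else x
  have hf : ∀ i, EqOn f (g i • ·) (P i) := by
    intro i x hx
    have hx' : ∃ i, x ∈ P i := ⟨i, hx⟩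
    obtain rfl : hx'.choose = i := hP.eq (not_disjoint_iff.2 ⟨x, hx'.choose_spec, hx⟩)
    simp only [f, dif_pos hx']
  have himage : ∀ i, f '' P i = g i • P i := fun i ↦ (hf i).image_eq
  have hinj : InjOn f (⋃ i, P i) := by
    intro x hx y hy hxy
    obtain ⟨i, hxi⟩ := mem_iUnion.1 hx
    obtain ⟨j, hyj⟩ := mem_iUnion.1 hy
    replace hxy : g i • x = g j • y := by rwa [hf i hxi, hf j hyj] at hxy
    obtain rfl : i = j := hgP.eq (not_disjoint_iff.2
      ⟨_, smul_mem_smul_set hxi, hxy ▸ smul_mem_smul_set hyj⟩)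
    exact smul_left_cancel _ hxy
  refine ⟨f, Finset.univ.image g, ?_, ?_⟩
  · simpa only [image_iUnion, himage] using hinj.bijOn_image
  · intro x hx
    obtain ⟨i, hi⟩ := mem_iUnion.1 hx
    exact ⟨g i, Finset.mem_image_of_mem g (Finset.mem_univ i), hf i hi⟩

theorem of_bijOn_isDecompOn {f : X → X} {S : Finset G} (hf : BijOn f A B)
    (hS : IsDecompOn f A S) : EquidecompG G A B := by
  have hγ : ∀ a, ∃ γ : G, a ∈ A → γ ∈ S ∧ f a = γ • a := fun a ↦ by
    by_cases ha : a ∈ A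
    · obtain ⟨γ, hγS, hfa⟩ := hS a ha
      exact ⟨γ, fun _ ↦ ⟨hγS, hfa⟩⟩
    · exact ⟨1, fun h ↦ absurd h ha⟩
  choose γ hγ using hγ
  let g : Fin S.card → G := fun i ↦ S.equivFin.symm i
  let P : Fin S.card → Set X := fun i ↦ {a ∈ A | γ a = g i}
  have hPA : ∀ i, P i ⊆ A := fun i a ha ↦ ha.1
  have hP : Pairwise (Disjoint on P) := fun i j hij ↦ disjoint_left.2 fun a hai haj ↦
    hij (S.equivFin.symm.injective (Subtype.val_injective (hai.2.symm.trans haj.2)))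
  have hUP : ⋃ i, P i = A := subset_antisymm (iUnion_subset hPA) fun a ha ↦
    mem_iUnion.2 ⟨S.equivFin ⟨γ a, (hγ a ha).1⟩, ha, by simp [g]⟩
  have himage : ∀ i, f '' P i = g i • P i := fun i ↦
    image_congr fun a ha ↦ ha.2 ▸ (hγ a ha.1).2
  refine ⟨S.card, P, g, hP, hUP, fun i j hij ↦ ?_, ?_⟩
  · simpa only [onFun, ← himage] using (hP hij).image hf.injOn (hPA i) (hPA j)
  · simp only [← himage, ← image_iUnion, hUP, hf.image_eq]

theorem of_superset_of_subset (h : EquidecompG G A C) (hCB : C ⊆ B) (hBA : B ⊆ A) :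
    EquidecompG G A B := by
  classical
  obtain ⟨f, S, hf, hS⟩ := h.exists_bijOn_isDecompOn
  obtain ⟨φ, hφ, hφf⟩ :=
    hf.injOn.exists_bijOn_of_mapsTo_of_subset (hf.mapsTo.mono_right hCB) hBA
  refine of_bijOn_isDecompOn (S := insert 1 S) hφ fun a ha ↦ ?_
  rcases hφf a ha with hφa | hφa
  · obtain ⟨γ, hγS, hfa⟩ := hS a ha
    exact ⟨γ, Finset.mem_insert_of_mem hγS, hφa.trans hfa⟩
  · exact ⟨1, Finset.mem_insert_self 1 S, by rw [hφa, one_smul]⟩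

end EquidecompG

/-- A nonempty set `A` is `G`-paradoxical iff it contains two disjoint subsets,
each `G`-equidecomposable with `A`. -/
theorem paradoxical_iff_disjoint_subsets {G X : Type*} [Group G] [MulAction G X]
    {A : Set X} (hA : A.Nonempty) :
    Paradoxical G A ↔ ∃ A₁ A₂ : Set X, A₁ ⊆ A ∧ A₂ ⊆ A ∧ Disjoint A₁ A₂ ∧
      EquidecompG G A₁ A ∧ EquidecompG G A₂ A := by
  constructor
  · rintro ⟨-, A₁, A₂, rfl, hdisj, h₁, h₂⟩
    exact ⟨A₁, A₂, subset_union_left, subset_union_right, hdisj, h₁, h₂⟩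
  · rintro ⟨A₁, A₂, h₁A, h₂A, hdisj, h₁, h₂⟩
    refine ⟨hA, A \ A₂, A₂, sdiff_union_of_subset h₂A, disjoint_sdiff_left, ?_, h₂⟩
    exact (h₁.symm.of_superset_of_subset (subset_sdiff.2 ⟨h₁A, hdisj⟩) sdiff_subset).symm
end

section
/- The rotations σ about the x-axis and τ about the y-axis, both by the angle θ = arccos(4/5), freely generate a free subgroup of SO(3) of rank 2. -/
open scoped Pointwise

abbrev E3 : Type := EuclideanSpace ℝ (Fin 3)
abbrev SO3 : Type := Matrix.specialOrthogonalGroup (Fin 3) ℝ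

noncomputable instance : Group SO3 :=
  { (inferInstance : Monoid SO3) with
    inv := fun A => ⟨star A.1, by
      refine ⟨Unitary.star_mem A.2.1, ?_⟩
      show (star A.1).det = 1
      have h : A.1.det = 1 := A.2.2
      rw [Matrix.star_eq_conjTranspose, Matrix.det_conjTranspose, h]
      simp⟩
    inv_mul_cancel := fun A => Subtype.ext (Matrix.mem_unitaryGroup_iff'.mp A.2.1) }

noncomputable instance : SMul SO3 E3 := ⟨fun g x => WithLp.toLp 2 (g.1.mulVec x)⟩

/-- `SO3` acts on `ℝ³` by rotation (matrix-vector multiplication). -/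
noncomputable instance : MulAction SO3 E3 where
  one_smul x := congrArg (WithLp.toLp 2) (Matrix.one_mulVec x.ofLp)
  mul_smul g h x := congrArg (WithLp.toLp 2) (Matrix.mulVec_mulVec x.ofLp g.1 h.1).symm

lemma SO3.smul_add (g : SO3) (x y : E3) : g • (x + y) = g • x + g • y :=
  congrArg (WithLp.toLp 2) (Matrix.mulVec_add g.1 x.ofLp y.ofLp)

lemma SO3.smul_neg (g : SO3) (x : E3) : g • (-x) = -(g • x) :=
  congrArg (WithLp.toLp 2) (Matrix.mulVec_neg x.ofLp g.1)

/-- The rotation about the x-axis by the angle `θ = arccos (4/5)`. -/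
noncomputable def sigmaMat : Matrix (Fin 3) (Fin 3) ℝ :=
  (1 / 5 : ℝ) • !![5, 0, 0; 0, 4, -3; 0, 3, 4]

/-- The rotation about the y-axis by the angle `θ = arccos (4/5)`. -/
noncomputable def tauMat : Matrix (Fin 3) (Fin 3) ℝ :=
  (1 / 5 : ℝ) • !![4, 0, 3; 0, 5, 0; -3, 0, 4]

/-!
Scaled by 5, the rotations `σ^{±1}, τ^{±1}` become integer matrices, so a reduced word of
length `n ≥ 1` evaluating to the identity would give a product of `n` integer letter matrices
equal to `5ⁿ • 1`, which vanishes mod 5. But mod 5 each letter matrix has rank one,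
`u_x r_xᵀ`, and a product `u₁r₁ᵀ ⋯ uₙrₙᵀ` equals `(∏ rᵢ ⬝ uᵢ₊₁) • u₁rₙᵀ`. For the four
letters `r_x ⬝ u_y ≢ 0 (mod 5)` unless `y = x⁻¹`, which a reduced word never contains as
consecutive letters, so the product is nonzero mod 5.
-/

section RankOne

variable {ι n K : Type*} [Fintype n] [DecidableEq n] [Field K]

theorem List.prod_map_vecMulVec_ne_zero {u r : ι → n → K} {R : ι → ι → Prop}
    (hu : ∀ x, u x ≠ 0) (hr : ∀ x, r x ≠ 0) (hR : ∀ x y, R x y → r x ⬝ᵥ u y ≠ 0)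
    {L : List ι} (hL : L.IsChain R) (hne : L ≠ []) :
    (L.map fun x => Matrix.vecMulVec (u x) (r x)).prod ≠ 0 := by
  suffices key : ∀ x L, (x :: L).IsChain R → ∃ w ≠ 0,
      ((x :: L).map fun x => Matrix.vecMulVec (u x) (r x)).prod = Matrix.vecMulVec (u x) w by
    obtain ⟨x, L, rfl⟩ := List.exists_cons_of_ne_nil hne
    obtain ⟨w, hw, hprod⟩ := key x L hL
    rw [hprod]
    exact Matrix.vecMulVec_ne_zero (hu x) hw
  intro x L hL
  induction L generalizing x with
  | nil => exact ⟨r x, hr x, by simp⟩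
  | cons y L ih =>
    rw [List.isChain_cons_cons] at hL
    obtain ⟨w, hw, hprod⟩ := ih y hL.2
    refine ⟨(r x ⬝ᵥ u y) • w, smul_ne_zero (hR x y hL.1) hw, ?_⟩
    rw [List.map_cons, List.prod_cons, hprod, Matrix.vecMulVec_mul_vecMulVec]

end RankOne

theorem List.prod_map_smul_const {ι R M : Type*} [Monoid M] [CommMonoid R] [MulAction R M]
    [IsScalarTower R M M] [SMulCommClass R M M] (c : R) (f : ι → M) (L : List ι) :
    (L.map fun x => c • f x).prod = c ^ L.length • (L.map f).prod := by
  induction L with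
  | nil => simp
  | cons x L ih =>
    rw [List.map_cons, List.prod_cons, ih, smul_mul_smul_comm, List.map_cons, List.prod_cons,
      List.length_cons, pow_succ']

theorem Matrix.inv_smul_map_intCast_mem_specialOrthogonalGroup {n : Type*} [Fintype n]
    [DecidableEq n] (A : Matrix n n ℤ) {c : ℤ} (hc : c ≠ 0) (hA : A * A.transpose = c ^ 2 • 1)
    (hdet : A.det = c ^ Fintype.card n) :
    (c : ℝ)⁻¹ • A.map (↑) ∈ Matrix.specialOrthogonalGroup n ℝ := by
  have hc' : (c : ℝ) ≠ 0 := Int.cast_ne_zero.mpr hc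
  rw [Matrix.mem_specialOrthogonalGroup_iff, Matrix.mem_orthogonalGroup_iff]
  constructor
  · have hAℝ := congrArg (·.map (Int.castRingHom ℝ)) hA
    simp only [Matrix.map_mul, Matrix.transpose_map] at hAℝ
    rw [Int.coe_castRingHom, Matrix.map_smul' _ _ _ Int.cast_mul,
      Matrix.map_one _ Int.cast_zero Int.cast_one, Int.cast_pow] at hAℝ
    rw [Matrix.transpose_smul, smul_mul_smul_comm, hAℝ, smul_smul, ← sq, ← mul_pow,
      inv_mul_cancel₀ hc', one_pow, one_smul]
  · rw [Matrix.det_smul, ← Int.cast_det, hdet, Int.cast_pow, ← mul_pow, inv_mul_cancel₀ hc',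
      one_pow]

theorem Matrix.map_list_prod_map {ι n α β : Type*} [Fintype n] [DecidableEq n] [Semiring α]
    [Semiring β] (f : α →+* β) (A : ι → Matrix n n α) (L : List ι) :
    (L.map A).prod.map f = (L.map fun x => (A x).map f).prod := by
  change f.mapMatrix _ = _
  rw [map_list_prod, List.map_map]
  rfl

namespace SigmaTau

def sigmaInt : Matrix (Fin 3) (Fin 3) ℤ := !![5, 0, 0; 0, 4, -3; 0, 3, 4]

def tauInt : Matrix (Fin 3) (Fin 3) ℤ := !![4, 0, 3; 0, 5, 0; -3, 0, 4]

def generatorInt (i : Fin 2) : Matrix (Fin 3) (Fin 3) ℤ := if i = 0 then sigmaInt else tauInt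

def letterInt (x : Fin 2 × Bool) : Matrix (Fin 3) (Fin 3) ℤ :=
  cond x.2 (generatorInt x.1) (generatorInt x.1).transpose

def letterCol : Fin 2 × Bool → Fin 3 → ZMod 5
  | (0, true) => ![0, 1, 2]
  | (0, false) => ![0, 1, 3]
  | (1, true) => ![1, 0, 3]
  | (1, false) => ![1, 0, 2]

def letterRow : Fin 2 × Bool → Fin 3 → ZMod 5
  | (0, true) => ![0, 4, 2]
  | (0, false) => ![0, 4, 3]
  | (1, true) => ![4, 0, 3]
  | (1, false) => ![4, 0, 2]

theorem letterInt_map_zmod (x : Fin 2 × Bool) :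
    (letterInt x).map (Int.cast : ℤ → ZMod 5) =
      Matrix.vecMulVec (letterCol x) (letterRow x) := by
  decide +revert

theorem letterRow_dotProduct_letterCol_ne_zero (x y : Fin 2 × Bool)
    (h : x.1 = y.1 → x.2 = y.2) : letterRow x ⬝ᵥ letterCol y ≠ 0 := by
  decide +revert

theorem letterCol_ne_zero (x : Fin 2 × Bool) : letterCol x ≠ 0 := by
  decide +revert

theorem letterRow_ne_zero (x : Fin 2 × Bool) : letterRow x ≠ 0 := by
  decide +revert

theorem prod_letterInt_map_zmod_ne_zero {L : List (Fin 2 × Bool)} (hL : FreeGroup.IsReduced L)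
    (hne : L ≠ []) : (L.map letterInt).prod.map (Int.cast : ℤ → ZMod 5) ≠ 0 := by
  have hmap : (L.map letterInt).prod.map (Int.cast : ℤ → ZMod 5) =
      (L.map fun x => Matrix.vecMulVec (letterCol x) (letterRow x)).prod :=
    (Matrix.map_list_prod_map (Int.castRingHom (ZMod 5)) _ _).trans
      (congrArg List.prod (List.map_congr_left fun x _ => letterInt_map_zmod x))
  rw [hmap]
  have : Fact (Nat.Prime 5) := ⟨by norm_num⟩
  exact List.prod_map_vecMulVec_ne_zero letterCol_ne_zero letterRow_ne_zero
    letterRow_dotProduct_letterCol_ne_zero hL hne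

theorem prod_letterInt_ne_pow_smul_one {L : List (Fin 2 × Bool)} (hL : FreeGroup.IsReduced L)
    (hne : L ≠ []) : (L.map letterInt).prod ≠ (5 : ℤ) ^ L.length • 1 := by
  intro h
  apply prod_letterInt_map_zmod_ne_zero hL hne
  rw [h, Matrix.map_smul' _ _ _ Int.cast_mul]
  have h5 : (5 : ZMod 5) = 0 := rfl
  rw [Int.cast_pow, Int.cast_ofNat, h5, zero_pow (by simpa using hne), zero_smul]


theorem sigmaMat_eq : sigmaMat = ((5 : ℤ) : ℝ)⁻¹ • sigmaInt.map (↑) := by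
  ext i j
  fin_cases i <;> fin_cases j <;> simp [sigmaMat, sigmaInt]

theorem tauMat_eq : tauMat = ((5 : ℤ) : ℝ)⁻¹ • tauInt.map (↑) := by
  ext i j
  fin_cases i <;> fin_cases j <;> simp [tauMat, tauInt]

theorem sigmaMat_mem : sigmaMat ∈ Matrix.specialOrthogonalGroup (Fin 3) ℝ := by
  rw [sigmaMat_eq]
  exact Matrix.inv_smul_map_intCast_mem_specialOrthogonalGroup _ (by norm_num) (by decide)
    (by simp [Matrix.det_fin_three, sigmaInt])

theorem tauMat_mem : tauMat ∈ Matrix.specialOrthogonalGroup (Fin 3) ℝ := by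
  rw [tauMat_eq]
  exact Matrix.inv_smul_map_intCast_mem_specialOrthogonalGroup _ (by norm_num) (by decide)
    (by simp [Matrix.det_fin_three, tauInt])

noncomputable def generator (i : Fin 2) : SO3 :=
  if i = 0 then ⟨sigmaMat, sigmaMat_mem⟩ else ⟨tauMat, tauMat_mem⟩

theorem coe_letter (x : Fin 2 × Bool) :
    ((cond x.2 (generator x.1) (generator x.1)⁻¹ : SO3) : Matrix (Fin 3) (Fin 3) ℝ) =
      ((5 : ℤ) : ℝ)⁻¹ • (letterInt x).map (↑) := by
  obtain ⟨i, b⟩ := x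
  have hgen : ((generator i : SO3) : Matrix (Fin 3) (Fin 3) ℝ) =
      ((5 : ℤ) : ℝ)⁻¹ • (generatorInt i).map (↑) := by
    unfold generator generatorInt
    split_ifs
    · exact sigmaMat_eq
    · exact tauMat_eq
  cases b
  · change star ((generator i : SO3) : Matrix (Fin 3) (Fin 3) ℝ) = _
    rw [hgen, star_smul, star_trivial, Matrix.star_eq_conjTranspose,
      Matrix.conjTranspose_eq_transpose_of_trivial, ← Matrix.transpose_map]
    rfl
  · exact hgen

theorem prod_letterInt_eq_of_lift_generator_mk_eq_one {L : List (Fin 2 × Bool)}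
    (h : FreeGroup.lift generator (FreeGroup.mk L) = 1) :
    (L.map letterInt).prod = (5 : ℤ) ^ L.length • 1 := by
  have hmat := congrArg Subtype.val h
  rw [FreeGroup.lift_mk, Submonoid.coe_list_prod, List.map_map, Function.comp_def,
    List.map_congr_left fun x _ => coe_letter x, List.prod_map_smul_const] at hmat
  have hcast : (L.map fun x => (letterInt x).map ((↑) : ℤ → ℝ)).prod =
      (L.map letterInt).prod.map (↑) :=
    (Matrix.map_list_prod_map (Int.castRingHom ℝ) _ _).symm
  rw [hcast, inv_pow, inv_smul_eq_iff₀ (by positivity), OneMemClass.coe_one] at hmat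
  apply Matrix.map_injective (Int.cast_injective (α := ℝ))
  simp only [hmat, Matrix.map_smul' _ _ _ Int.cast_mul,
    Matrix.map_one _ Int.cast_zero Int.cast_one, Int.cast_pow]

end SigmaTau

/-- `σ` and `τ` belong to `SO(3)` and freely generate a free subgroup of rank 2:
the induced homomorphism from the free group on two generators is injective, i.e. no
nonempty reduced word in `σ, τ, σ⁻¹, τ⁻¹` is the identity. -/
theorem sigma_tau_free :
    ∃ (hσ : sigmaMat ∈ Matrix.specialOrthogonalGroup (Fin 3) ℝ)
      (hτ : tauMat ∈ Matrix.specialOrthogonalGroup (Fin 3) ℝ),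
      Function.Injective
        (FreeGroup.lift (fun i : Fin 2 =>
          if i = 0 then (⟨sigmaMat, hσ⟩ : SO3) else (⟨tauMat, hτ⟩ : SO3))) := by
  refine ⟨SigmaTau.sigmaMat_mem, SigmaTau.tauMat_mem,
    (injective_iff_map_eq_one _).mpr fun w hw => ?_⟩
  by_contra hne
  rw [← FreeGroup.mk_toWord (x := w)] at hw
  exact SigmaTau.prod_letterInt_ne_pow_smul_one FreeGroup.isReduced_toWord
    (mt FreeGroup.toWord_eq_nil_iff.mp hne)
    (SigmaTau.prod_letterInt_eq_of_lift_generator_mk_eq_one hw)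
end
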